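/- Let T be a rooted binary tree where each node v is assigned a positive real weight w(v) such that w(v) ≤ w(parent(v))/2 for every non-root node v, the root has weight n, and the leaves have pairwise 'disjoint' weights summing to at most n. Suppose additionally that every node v of T satisfies w(v) ≥ n/r for a parameter r ≥ 1. Then the number of nodes of T is O(r); concretely, at most 4r. -/

import Mathlib

/-- In a rooted binary tree with positive weights halving from
parent to child, root weight at most `n`, every antichain (set of pairwise
non-ancestor nodes, abstracting interior-disjoint regions) having total weight
at most `n`, and every node of weight at least `n/r` (with `r ≥ 1`), the number
of nodes is `O(r)`; concretely at most `4r`. -/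
theorem border_tree_node_count
    {V : Type*} [Fintype V] [DecidableEq V]
    (parent : V → V) (root : V)
    (hroot : parent root = root)
    (hreach : ∀ v, Relation.ReflTransGen (fun x y => parent x = y) v root)
    (hbinary : ∀ v, (Finset.univ.filter (fun c => parent c = v ∧ c ≠ v)).card ≤ 2)
    (w : V → ℝ) (n r : ℝ) (hn : 0 < n) (hr : 1 ≤ r)
    (hpos : ∀ v, 0 < w v)
    (hwroot : w root ≤ n)
    (hhalf : ∀ v, v ≠ root → w v ≤ w (parent v) / 2)
    (hlow : ∀ v, n / r ≤ w v)
    (hanti : ∀ A : Finset V,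
        (∀ u ∈ A, ∀ v ∈ A, u ≠ v →
          ¬ Relation.TransGen (fun x y => parent x = y) v u) →
        ∑ v ∈ A, w v ≤ n) :
    (Fintype.card V : ℝ) ≤ 4 * r := by
  classical
  -- weights are monotone along ancestor paths
  have hmono : ∀ v u, Relation.ReflTransGen (fun x y => parent x = y) v u →
      w v ≤ w u := by
    intro v u h
    induction h with
    | refl => exact le_refl _
    | @tail b c hb hstep ih =>
      have hbc : w b ≤ w c := by
        by_cases hbr : b = root
        · have : c = root := by rw [← hstep, hbr, hroot]
          rw [hbr, this]
        · have := hhalf b hbr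
          rw [hstep] at this
          have := hpos c
          linarith
      exact ih.trans hbc
  -- strict ancestors have at least double weight
  have hanc : ∀ v u, Relation.TransGen (fun x y => parent x = y) v u →
      v = u ∨ w v ≤ w u / 2 := by
    intro v u h
    induction h with
    | @single b hstep =>
      by_cases hvr : v = root
      · left; rw [← hstep, hvr, hroot]
      · right; have := hhalf v hvr; rw [hstep] at this; exact this
    | @tail b c hb hstep ih =>
      by_cases hbr : b = root
      · have hcb : c = b := by rw [← hstep, hbr, hroot]
        rw [hcb]; exact ih
      · have hbc : w b ≤ w c / 2 := by
          have := hhalf b hbr; rw [hstep] at this; exact this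
        rcases ih with h1 | h1
        · right; rw [h1]; exact hbc
        · right
          have := hpos c
          linarith
  have wle : ∀ v, w v ≤ n := fun v => (hmono v root (hreach v)).trans hwroot
  -- band existence
  have hex : ∀ v : V, ∃ k : ℕ, n < w v * 2 ^ (k + 1) := by
    intro v
    obtain ⟨k, hk⟩ := pow_unbounded_of_one_lt (n / w v) (by norm_num : (1:ℝ) < 2)
    refine ⟨k, ?_⟩
    have hwv := hpos v
    have h1 : n < w v * 2 ^ k := by
      rwa [div_lt_iff₀ hwv, mul_comm] at hk
    have h2 : w v * 2 ^ k ≤ w v * 2 ^ (k + 1) := by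
      apply mul_le_mul_of_nonneg_left _ hwv.le
      exact pow_le_pow_right₀ (by norm_num) (Nat.le_succ k)
    linarith
  let kf : V → ℕ := fun v => Nat.find (hex v)
  have hk1 : ∀ v, n < w v * 2 ^ (kf v + 1) := fun v => Nat.find_spec (hex v)
  have hk2 : ∀ v, w v * 2 ^ (kf v) ≤ n := by
    intro v
    rcases Nat.eq_zero_or_pos (kf v) with h0 | h0
    · rw [h0]; simpa using wle v
    · obtain ⟨m, hm⟩ := Nat.exists_eq_succ_of_ne_zero h0.ne'
      have hm' : m < Nat.find (hex v) := by
        have : kf v = Nat.find (hex v) := rfl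
        omega
      have := Nat.find_min (hex v) hm'
      rw [hm]
      exact le_of_not_gt this
  have hkr : ∀ v, (2:ℝ) ^ (kf v) ≤ r := by
    intro v
    have hrpos : (0:ℝ) < r := by linarith
    have h1 : n / r * 2 ^ (kf v) ≤ n := by
      calc n / r * 2 ^ (kf v) ≤ w v * 2 ^ (kf v) := by
            apply mul_le_mul_of_nonneg_right (hlow v) (by positivity)
        _ ≤ n := hk2 v
    have hnr : n / r * r = n := div_mul_cancel₀ n hrpos.ne'
    have hnrpos : (0:ℝ) < n / r := div_pos hn hrpos
    nlinarith
  -- each band is an antichain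
  have hband : ∀ k : ℕ,
      ((Finset.univ.filter (fun v => kf v = k)).card : ℝ) ≤ 2 ^ (k + 1) := by
    intro k
    set A := Finset.univ.filter (fun v => kf v = k) with hA
    have hAanti : ∀ u ∈ A, ∀ v ∈ A, u ≠ v →
        ¬ Relation.TransGen (fun x y => parent x = y) v u := by
      intro u hu v hv huv htg
      have hku : kf u = k := (Finset.mem_filter.mp hu).2
      have hkv : kf v = k := (Finset.mem_filter.mp hv).2
      rcases hanc v u htg with h1 | h1
      · exact huv h1.symm
      · have ha : n < w v * 2 ^ (k + 1) := by rw [← hkv]; exact hk1 v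
        have hb : w u * 2 ^ k ≤ n := by rw [← hku]; exact hk2 u
        have hp : (0:ℝ) < 2 ^ k := by positivity
        have ha' : n < w v * 2 ^ k * 2 := by
          have h2 : w v * 2 ^ (k+1) = w v * 2 ^ k * 2 := by ring
          linarith [h2 ▸ ha]
        have h3 : w v * 2 ^ k ≤ w u / 2 * 2 ^ k :=
          mul_le_mul_of_nonneg_right h1 hp.le
        have h4 : w u / 2 * 2 ^ k * 2 = w u * 2 ^ k := by ring
        linarith
    have hsum := hanti A hAanti
    have hlb : ∀ v ∈ A, n / 2 ^ (k + 1) ≤ w v := by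
      intro v hv
      have hkv : kf v = k := (Finset.mem_filter.mp hv).2
      have ha : n < w v * 2 ^ (k + 1) := by rw [← hkv]; exact hk1 v
      rw [div_le_iff₀ (by positivity)]
      linarith
    have hc := Finset.card_nsmul_le_sum A w (n / 2 ^ (k + 1)) hlb
    rw [nsmul_eq_mul] at hc
    have hcc : (A.card : ℝ) * (n / 2 ^ (k + 1)) ≤ n := hc.trans hsum
    have hpos2 : (0:ℝ) < n / 2 ^ (k + 1) := by positivity
    have key : (2:ℝ) ^ (k+1) * (n / 2 ^ (k + 1)) = n := by
      field_simp
    have h5 : (A.card : ℝ) * (n / 2 ^ (k + 1)) ≤ (2:ℝ) ^ (k + 1) * (n / 2 ^ (k + 1)) := by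
      rw [key]; exact hcc
    exact le_of_mul_le_mul_right h5 hpos2
  -- put it together
  rcases isEmpty_or_nonempty V with hV | hV
  · simp [Fintype.card_eq_zero]
    linarith
  · set K := Finset.univ.sup kf with hK
    have h2K : (2:ℝ) ^ K ≤ r := by
      obtain ⟨v₀, _, hv₀⟩ := Finset.exists_mem_eq_sup Finset.univ
        Finset.univ_nonempty kf
      rw [hK, hv₀]
      exact hkr v₀
    have hcard : Fintype.card V =
        ∑ k ∈ Finset.range (K + 1), (Finset.univ.filter (fun v => kf v = k)).card := by
      rw [← Finset.card_univ]
      apply Finset.card_eq_sum_card_fiberwise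
      intro v _
      rw [Finset.mem_coe, Finset.mem_range]
      exact Nat.lt_succ_of_le (Finset.le_sup (Finset.mem_univ v))
    have hgeo : ∑ k ∈ Finset.range (K + 1), (2:ℝ) ^ (k + 1)
        = 2 * (2 ^ (K + 1) - 1) := by
      have : ∑ k ∈ Finset.range (K + 1), (2:ℝ) ^ (k + 1)
          = 2 * ∑ k ∈ Finset.range (K + 1), (2:ℝ) ^ k := by
        rw [Finset.mul_sum]
        apply Finset.sum_congr rfl
        intro k _
        ring
      rw [this, geom_sum_eq (by norm_num : (2:ℝ) ≠ 1)]
      norm_num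
    calc (Fintype.card V : ℝ)
        = ∑ k ∈ Finset.range (K + 1),
            ((Finset.univ.filter (fun v => kf v = k)).card : ℝ) := by
          rw [hcard]; push_cast; ring
      _ ≤ ∑ k ∈ Finset.range (K + 1), (2:ℝ) ^ (k + 1) :=
          Finset.sum_le_sum (fun k _ => hband k)
      _ = 2 * (2 ^ (K + 1) - 1) := hgeo
      _ ≤ 4 * 2 ^ K := by
          have : (2:ℝ) ^ (K + 1) = 2 * 2 ^ K := by ring
          rw [this]; ring_nf; nlinarith [pow_pos (by norm_num : (0:ℝ) < 2) K]
      _ ≤ 4 * r := by linarith
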